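/- arXiv:1506.04091 — 2 statements merged into one kernel-verified Lean document; each statement's English description precedes it below -/
import Mathlib

section
/- Assume the Mammen–Tsybakov margin assumption: 𝔼[(1{f_θ(X) ≠ Y} - 1{f_θ̄(X) ≠ Y})²] ≤ C (R(θ) - R̄) for all θ, where R̄ = R(θ̄) is the minimal risk. Then for any λ with 0 < λ < 2n, 𝔼 exp{λ[R(θ) - R̄] - λ[r_n(θ) - r̄_n]} ≤ exp( (Cλ²/(2n - λ)) (R(θ) - R̄) ), i.e. the Bernstein assumption holds with g(λ,n) = Cλ²/(2n - λ). -/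
/-!
Write `W i = 1{fbar (X i) ≠ Y i} - 1{f (X i) ≠ Y i} ∈ {-1, 0, 1}`. The exponent equals
`λ (R - R̄) + (λ/n) ∑ W i`, so by independence the expectation is `exp (λ (R - R̄))` times
the `n`-th power of the moment generating function of `W` at `t = λ/n`.
For `z ∈ {-1, 0, 1}` and `0 ≤ t < 2` one has `exp (t z) ≤ 1 + t z + t²/(2-t) z²`, whose
case `z = 1` is the Padé bound `eᵗ (2 - t) ≤ 2 + t`, i.e. `tanh (t/2) ≤ t/2`.
Integrating, with `1 + x ≤ eˣ`, `𝔼 W = -(R - R̄)` and the margin assumption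
`𝔼 W² ≤ C (R - R̄)`, each factor is at most `exp (-t (R - R̄) + C t²/(2-t) (R - R̄))`,
and `n t²/(2-t) = λ²/(2n-λ)`.
-/

open MeasureTheory ProbabilityTheory

namespace Real

theorem sinh_le_mul_cosh {x : ℝ} (hx : 0 ≤ x) : sinh x ≤ x * cosh x := by
  refine hasSum_le (fun k => ?_) (hasSum_sinh x) ((hasSum_cosh x).mul_left x)
  rw [← mul_div_assoc, ← pow_succ']
  gcongr
  exact Nat.le_succ _

-- `tanh (t/2) ≤ t/2`, multiplied out.
theorem exp_mul_two_sub_le {t : ℝ} (ht : 0 ≤ t) : exp t * (2 - t) ≤ 2 + t := by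
  have h := sinh_le_mul_cosh (by positivity : 0 ≤ t / 2)
  rw [sinh_eq, cosh_eq] at h
  have hsq : exp (t / 2) * exp (t / 2) = exp t := by rw [← exp_add, add_halves]
  have hinv : exp (t / 2) * exp (-(t / 2)) = 1 := by rw [← exp_add, add_neg_cancel, exp_zero]
  nlinarith [mul_le_mul_of_nonneg_left h (exp_pos (t / 2)).le]

theorem exp_le_one_add_add_sq_div {t : ℝ} (ht0 : 0 ≤ t) (ht2 : t < 2) :
    exp t ≤ 1 + t + t ^ 2 / (2 - t) := by
  have h2t : 0 < 2 - t := by linarith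
  have : 1 + t + t ^ 2 / (2 - t) = (2 + t) / (2 - t) := by field_simp; ring
  rw [this, le_div_iff₀ h2t]
  exact exp_mul_two_sub_le ht0

theorem exp_neg_le_one_sub_add_sq_div {t : ℝ} (ht0 : 0 ≤ t) (ht2 : t < 2) :
    exp (-t) ≤ 1 - t + t ^ 2 / (2 - t) := by
  have h := self_le_sinh_iff.mpr ht0
  rw [sinh_eq] at h
  linarith [exp_le_one_add_add_sq_div ht0 ht2]

theorem exp_mul_le_of_mem_neg_one_zero_one {t z : ℝ} (ht0 : 0 ≤ t) (ht2 : t < 2)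
    (hz : z = -1 ∨ z = 0 ∨ z = 1) :
    exp (t * z) ≤ 1 + t * z + t ^ 2 / (2 - t) * z ^ 2 := by
  rcases hz with rfl | rfl | rfl
  · simpa [← sub_eq_add_neg] using exp_neg_le_one_sub_add_sq_div ht0 ht2
  · simp
  · simpa using exp_le_one_add_add_sq_div ht0 ht2

end Real

namespace ProbabilityTheory

open Real

variable {Ω : Type*} [MeasurableSpace Ω] {P : Measure Ω} [IsProbabilityMeasure P]

theorem mgf_le_exp_of_mem_neg_one_zero_one {Z : Ω → ℝ} (hZm : AEStronglyMeasurable Z P)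
    (hZ : ∀ ω, Z ω = -1 ∨ Z ω = 0 ∨ Z ω = 1) {t : ℝ} (ht0 : 0 ≤ t) (ht2 : t < 2) :
    mgf Z P t ≤ exp (t * ∫ ω, Z ω ∂P + t ^ 2 / (2 - t) * ∫ ω, Z ω ^ 2 ∂P) := by
  have hbound : ∀ ω, ‖Z ω‖ ≤ 1 := fun ω => by rcases hZ ω with h | h | h <;> simp [h]
  have hZi : Integrable Z P := .of_bound hZm 1 (ae_of_all _ hbound)
  have hZ2i : Integrable (fun ω => Z ω ^ 2) P :=
    .of_bound (hZm.pow 2) 1 (ae_of_all _ fun ω => by rcases hZ ω with h | h | h <;> simp [h])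
  set g := t ^ 2 / (2 - t)
  have hlin : Integrable (fun ω => 1 + t * Z ω) P := (integrable_const 1).add (hZi.const_mul t)
  calc mgf Z P t = ∫ ω, exp (t * Z ω) ∂P := rfl
    _ ≤ ∫ ω, (1 + t * Z ω + g * Z ω ^ 2) ∂P :=
      integral_mono_of_nonneg (ae_of_all _ fun ω => (exp_pos _).le)
        (hlin.add (hZ2i.const_mul g))
        (ae_of_all _ fun ω => exp_mul_le_of_mem_neg_one_zero_one ht0 ht2 (hZ ω))
    _ = 1 + (t * ∫ ω, Z ω ∂P + g * ∫ ω, Z ω ^ 2 ∂P) := by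
      rw [integral_add hlin (hZ2i.const_mul g),
        integral_add (integrable_const 1) (hZi.const_mul t), integral_const_mul,
        integral_const_mul]
      simp [add_assoc]
    _ ≤ exp (t * ∫ ω, Z ω ∂P + g * ∫ ω, Z ω ^ 2 ∂P) := by
      linarith [add_one_le_exp (t * ∫ ω, Z ω ∂P + g * ∫ ω, Z ω ^ 2 ∂P)]

theorem iIndepFun.mgf_sum_le_of_mem_neg_one_zero_one {ι : Type*} [Fintype ι] {W : ι → Ω → ℝ}
    {j : ι} (hindep : iIndepFun W P) (hW : ∀ i, Measurable (W i))
    (hident : ∀ i, IdentDistrib (W i) (W j) P P) (hWj : ∀ ω, W j ω = -1 ∨ W j ω = 0 ∨ W j ω = 1)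
    {t : ℝ} (ht0 : 0 ≤ t) (ht2 : t < 2) :
    mgf (∑ i, W i) P t ≤
      exp (Fintype.card ι * (t * ∫ ω, W j ω ∂P + t ^ 2 / (2 - t) * ∫ ω, W j ω ^ 2 ∂P)) := by
  rw [mgf_sum_of_identDistrib hW hindep (fun i _ k _ => (hident i).trans (hident k).symm)
    (Finset.mem_univ j), exp_nat_mul, Finset.card_univ]
  exact pow_le_pow_left₀ mgf_nonneg
    (mgf_le_exp_of_mem_neg_one_zero_one (hW j).aestronglyMeasurable hWj ht0 ht2) _

end ProbabilityTheory

section ZeroOneLoss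

variable {Ω 𝒳 : Type*}

def zeroOneLoss (g : 𝒳 → Bool) (p : 𝒳 × Bool) : ℝ := if g p.1 ≠ p.2 then 1 else 0

theorem measurable_zeroOneLoss [MeasurableSpace 𝒳] {g : 𝒳 → Bool} (hg : Measurable g) :
    Measurable (zeroOneLoss g) :=
  Measurable.ite (measurableSet_eq_fun (hg.comp measurable_fst) measurable_snd).compl
    measurable_const measurable_const

theorem zeroOneLoss_comp_eq_indicator (g : 𝒳 → Bool) (X : Ω → 𝒳) (Y : Ω → Bool) :
    (fun ω => zeroOneLoss g (X ω, Y ω)) = {ω | g (X ω) ≠ Y ω}.indicator 1 := by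
  ext ω
  simp [zeroOneLoss, Set.indicator_apply]

section Risk

variable [MeasurableSpace Ω] [MeasurableSpace 𝒳] {P : Measure Ω} {g : 𝒳 → Bool}
  {X : Ω → 𝒳} {Y : Ω → Bool}

theorem integrable_zeroOneLoss [IsFiniteMeasure P] (hg : Measurable g) (hX : Measurable X)
    (hY : Measurable Y) : Integrable (fun ω => zeroOneLoss g (X ω, Y ω)) P := by
  rw [zeroOneLoss_comp_eq_indicator]
  exact (integrable_const 1).indicator (measurableSet_eq_fun (hg.comp hX) hY).compl

theorem integral_zeroOneLoss (hg : Measurable g) (hX : Measurable X) (hY : Measurable Y) :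
    ∫ ω, zeroOneLoss g (X ω, Y ω) ∂P = (P {ω | g (X ω) ≠ Y ω}).toReal := by
  rw [zeroOneLoss_comp_eq_indicator]
  exact integral_indicator_one (measurableSet_eq_fun (hg.comp hX) hY).compl

theorem integral_zeroOneLoss_sub_zeroOneLoss [IsFiniteMeasure P] {h : 𝒳 → Bool}
    (hg : Measurable g) (hh : Measurable h) (hX : Measurable X) (hY : Measurable Y) :
    ∫ ω, (zeroOneLoss g (X ω, Y ω) - zeroOneLoss h (X ω, Y ω)) ∂P
      = (P {ω | g (X ω) ≠ Y ω}).toReal - (P {ω | h (X ω) ≠ Y ω}).toReal := by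
  rw [integral_sub (integrable_zeroOneLoss hg hX hY) (integrable_zeroOneLoss hh hX hY),
    integral_zeroOneLoss hg hX hY, integral_zeroOneLoss hh hX hY]

end Risk

theorem zeroOneLoss_sub_zeroOneLoss_trichotomy (g h : 𝒳 → Bool) (p : 𝒳 × Bool) :
    zeroOneLoss g p - zeroOneLoss h p = -1 ∨ zeroOneLoss g p - zeroOneLoss h p = 0 ∨
      zeroOneLoss g p - zeroOneLoss h p = 1 := by
  unfold zeroOneLoss
  split_ifs <;> norm_num

end ZeroOneLoss

theorem bernstein_classification_general {Ω 𝒳 : Type*} [MeasurableSpace Ω] [MeasurableSpace 𝒳]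
    (P : Measure Ω) [IsProbabilityMeasure P]
    (n : ℕ) (hn : 0 < n)
    (X : Fin n → Ω → 𝒳) (Y : Fin n → Ω → Bool)
    (hX : ∀ i, Measurable (X i)) (hY : ∀ i, Measurable (Y i))
    (hindep : iIndepFun (fun i ω => (X i ω, Y i ω)) P)
    (hident : ∀ i, IdentDistrib (fun ω => (X i ω, Y i ω))
      (fun ω => (X ⟨0, hn⟩ ω, Y ⟨0, hn⟩ ω)) P P)
    (f fbar : 𝒳 → Bool) (hf : Measurable f) (hfbar : Measurable fbar)
    (C : ℝ)
    -- Mammen–Tsybakov margin assumption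
    (hmargin : ∫ ω, ((if f (X ⟨0, hn⟩ ω) ≠ Y ⟨0, hn⟩ ω then (1:ℝ) else 0)
          - (if fbar (X ⟨0, hn⟩ ω) ≠ Y ⟨0, hn⟩ ω then (1:ℝ) else 0)) ^ 2 ∂P
        ≤ C * ((P {ω | f (X ⟨0, hn⟩ ω) ≠ Y ⟨0, hn⟩ ω}).toReal
          - (P {ω | fbar (X ⟨0, hn⟩ ω) ≠ Y ⟨0, hn⟩ ω}).toReal))
    (lam : ℝ) (hlam : 0 < lam) (hlam2 : lam < 2 * n) :
    ∫ ω, Real.exp (lam * ((P {ω' | f (X ⟨0, hn⟩ ω') ≠ Y ⟨0, hn⟩ ω'}).toReal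
          - (P {ω' | fbar (X ⟨0, hn⟩ ω') ≠ Y ⟨0, hn⟩ ω'}).toReal)
        - lam * ((1 / n) * ∑ i, (if f (X i ω) ≠ Y i ω then (1:ℝ) else 0)
          - (1 / n) * ∑ i, (if fbar (X i ω) ≠ Y i ω then (1:ℝ) else 0))) ∂P
      ≤ Real.exp ((C * lam ^ 2 / (2 * n - lam))
          * ((P {ω' | f (X ⟨0, hn⟩ ω') ≠ Y ⟨0, hn⟩ ω'}).toReal
            - (P {ω' | fbar (X ⟨0, hn⟩ ω') ≠ Y ⟨0, hn⟩ ω'}).toReal)) := by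
  set i₀ : Fin n := ⟨0, hn⟩
  set m := (P {ω | f (X i₀ ω) ≠ Y i₀ ω}).toReal - (P {ω | fbar (X i₀ ω) ≠ Y i₀ ω}).toReal
  set t := lam / n
  have hℓ : Measurable fun p => zeroOneLoss fbar p - zeroOneLoss f p :=
    (measurable_zeroOneLoss hfbar).sub (measurable_zeroOneLoss hf)
  set W : Fin n → Ω → ℝ := fun i ω =>
    zeroOneLoss fbar (X i ω, Y i ω) - zeroOneLoss f (X i ω, Y i ω)
  have hW : ∀ i, Measurable (W i) := fun i => hℓ.comp ((hX i).prodMk (hY i))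
  have hWindep : iIndepFun W P := hindep.comp _ fun _ => hℓ
  have hmean : ∫ ω, W i₀ ω ∂P = -m := by
    rw [integral_zeroOneLoss_sub_zeroOneLoss hfbar hf (hX i₀) (hY i₀), neg_sub]
  have hsq : ∫ ω, W i₀ ω ^ 2 ∂P ≤ C * m := by
    refine le_of_eq_of_le (integral_congr_ae (ae_of_all _ fun ω => ?_)) hmargin
    simp only [W, zeroOneLoss]
    ring
  have ht2 : t < 2 := by rw [div_lt_iff₀ (Nat.cast_pos.mpr hn)]; linarith
  calc _ = Real.exp (lam * m) * mgf (∑ i, W i) P t := by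
        rw [mgf, ← integral_const_mul]
        congr 1 with ω
        rw [← Real.exp_add]
        congr 1
        simp only [W, Finset.sum_apply, Finset.sum_sub_distrib, zeroOneLoss, t]
        field_simp
        ring
    _ ≤ Real.exp (lam * m) * Real.exp (n * (t * -m + t ^ 2 / (2 - t) * (C * m))) := by
        gcongr
        refine (hWindep.mgf_sum_le_of_mem_neg_one_zero_one hW (fun i => (hident i).comp hℓ)
          (fun ω => zeroOneLoss_sub_zeroOneLoss_trichotomy _ _ _) (by positivity) ht2).trans ?_
        rw [Fintype.card_fin, hmean]
        gcongr
    _ = _ := by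
        have hgap : 2 * (n : ℝ) - lam ≠ 0 := by linarith
        rw [← Real.exp_add]
        congr 1
        simp only [t]
        field_simp
        ring

/-- Bernstein assumption for i.i.d. 0-1 classification loss under the
Mammen–Tsybakov margin assumption, with `g(λ,n) = Cλ²/(2n-λ)`:
`𝔼 exp{λ[R(θ)-R̄] - λ[r_n(θ)-r̄_n]} ≤ exp((Cλ²/(2n-λ))(R(θ)-R̄))`. -/
theorem bernstein_classification {Ω 𝒳 : Type*} [MeasurableSpace Ω] [MeasurableSpace 𝒳]
    (P : Measure Ω) [IsProbabilityMeasure P]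
    (n : ℕ) (hn : 0 < n)
    (X : Fin n → Ω → 𝒳) (Y : Fin n → Ω → Bool)
    (hX : ∀ i, Measurable (X i)) (hY : ∀ i, Measurable (Y i))
    (hindep : iIndepFun (fun i ω => (X i ω, Y i ω)) P)
    (hident : ∀ i, IdentDistrib (fun ω => (X i ω, Y i ω))
      (fun ω => (X ⟨0, hn⟩ ω, Y ⟨0, hn⟩ ω)) P P)
    (f fbar : 𝒳 → Bool) (hf : Measurable f) (hfbar : Measurable fbar)
    -- `fbar` is the Bayes optimal classifier in the class: `R̄ ≤ R(θ)`
    (hmin : (P {ω | fbar (X ⟨0, hn⟩ ω) ≠ Y ⟨0, hn⟩ ω}).toReal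
      ≤ (P {ω | f (X ⟨0, hn⟩ ω) ≠ Y ⟨0, hn⟩ ω}).toReal)
    (C : ℝ) (hC : 0 < C)
    -- Mammen–Tsybakov margin assumption
    (hmargin : ∫ ω, ((if f (X ⟨0, hn⟩ ω) ≠ Y ⟨0, hn⟩ ω then (1:ℝ) else 0)
          - (if fbar (X ⟨0, hn⟩ ω) ≠ Y ⟨0, hn⟩ ω then (1:ℝ) else 0)) ^ 2 ∂P
        ≤ C * ((P {ω | f (X ⟨0, hn⟩ ω) ≠ Y ⟨0, hn⟩ ω}).toReal
          - (P {ω | fbar (X ⟨0, hn⟩ ω) ≠ Y ⟨0, hn⟩ ω}).toReal))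
    (lam : ℝ) (hlam : 0 < lam) (hlam2 : lam < 2 * n) :
    ∫ ω, Real.exp (lam * ((P {ω' | f (X ⟨0, hn⟩ ω') ≠ Y ⟨0, hn⟩ ω'}).toReal
          - (P {ω' | fbar (X ⟨0, hn⟩ ω') ≠ Y ⟨0, hn⟩ ω'}).toReal)
        - lam * ((1 / n) * ∑ i, (if f (X i ω) ≠ Y i ω then (1:ℝ) else 0)
          - (1 / n) * ∑ i, (if fbar (X i ω) ≠ Y i ω then (1:ℝ) else 0))) ∂P
      ≤ Real.exp ((C * lam ^ 2 / (2 * n - lam))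
          * ((P {ω' | f (X ⟨0, hn⟩ ω') ≠ Y ⟨0, hn⟩ ω'}).toReal
            - (P {ω' | fbar (X ⟨0, hn⟩ ω') ≠ Y ⟨0, hn⟩ ω'}).toReal)) :=
  bernstein_classification_general P n hn X Y hX hY hindep hident f fbar hf hfbar C hmargin lam hlam
    hlam2
end

section
/- Let X ∈ ℝ^d be a random vector satisfying Assumption A1: there is c > 0 such that for all unit vectors θ, θ' ∈ ℝ^d, P(⟨X,θ⟩⟨X,θ'⟩ < 0) ≤ c‖θ - θ'‖. Let R(θ) = P(Y ≠ sign(⟨θ,X⟩)) be the classification error, with minimizer θ̄ of norm 1. Then for any θ ≠ 0, R(θ) - R(θ̄) ≤ 2c ‖θ - θ̄‖. -/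
open MeasureTheory
open scoped Classical

lemma aux_boundary_null {Ω : Type*} [MeasurableSpace Ω]
    (P : Measure Ω) [IsProbabilityMeasure P]
    {d : ℕ} (X : Ω → EuclideanSpace ℝ (Fin d))
    (c : ℝ) (hc : 0 < c)
    (hA1 : ∀ θ θ' : EuclideanSpace ℝ (Fin d), ‖θ‖ = 1 → ‖θ'‖ = 1 →
      (P {ω | (inner ℝ θ (X ω) : ℝ) * (inner ℝ θ' (X ω) : ℝ) < 0}).toReal
        ≤ c * ‖θ - θ'‖)
    (a b : EuclideanSpace ℝ (Fin d)) (ha : ‖a‖ = 1) (hb : ‖b‖ = 1) :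
    (P {ω | (inner ℝ a (X ω) : ℝ) = 0 ∧ (inner ℝ b (X ω) : ℝ) ≠ 0}).toReal = 0 := by
  refine le_antisymm ?_ ENNReal.toReal_nonneg
  refine le_of_forall_pos_le_add fun δ hδ => ?_
  rw [zero_add]
  set ε : ℝ := min (δ / (8 * c)) (1/2) with hεdef
  have hε0 : 0 < ε := lt_min (by positivity) (by norm_num)
  have hεhalf : ε ≤ 1/2 := min_le_right _ _
  have hεδ : c * (8 * ε) ≤ δ := by
    have h1 : ε ≤ δ / (8 * c) := min_le_left _ _
    rw [le_div_iff₀ (by positivity)] at h1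
    nlinarith
  refine le_trans ?_ hεδ
  set p := a + ε • b with hp
  set q := a - ε • b with hq
  have hεb : ‖ε • b‖ = ε := by
    rw [norm_smul, hb, Real.norm_eq_abs, abs_of_pos hε0, mul_one]
  have hpl : 1 - ε ≤ ‖p‖ := by
    have h1 : ‖a‖ ≤ ‖p‖ + ‖ε • b‖ := by
      calc ‖a‖ = ‖p - ε • b‖ := by rw [hp, add_sub_cancel_right]
      _ ≤ ‖p‖ + ‖ε • b‖ := norm_sub_le _ _
    rw [hεb, ha] at h1; linarith
  have hpu : ‖p‖ ≤ 1 + ε := by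
    calc ‖p‖ ≤ ‖a‖ + ‖ε • b‖ := norm_add_le _ _
    _ = 1 + ε := by rw [ha, hεb]
  have hql : 1 - ε ≤ ‖q‖ := by
    have h1 : ‖a‖ ≤ ‖q‖ + ‖ε • b‖ := by
      calc ‖a‖ = ‖q + ε • b‖ := by rw [hq, sub_add_cancel]
      _ ≤ ‖q‖ + ‖ε • b‖ := norm_add_le _ _
    rw [hεb, ha] at h1; linarith
  have hqu : ‖q‖ ≤ 1 + ε := by
    calc ‖q‖ ≤ ‖a‖ + ‖ε • b‖ := norm_sub_le _ _
    _ = 1 + ε := by rw [ha, hεb]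
  have hpp : (0:ℝ) < ‖p‖ := by linarith
  have hqp : (0:ℝ) < ‖q‖ := by linarith
  have hpne : p ≠ 0 := fun h => by rw [h, norm_zero] at hpp; exact lt_irrefl _ hpp
  have hqne : q ≠ 0 := fun h => by rw [h, norm_zero] at hqp; exact lt_irrefl _ hqp
  set w1 := ‖p‖⁻¹ • p with hw1
  set w2 := ‖q‖⁻¹ • q with hw2
  have hw1n : ‖w1‖ = 1 := norm_smul_inv_norm hpne
  have hw2n : ‖w2‖ = 1 := norm_smul_inv_norm hqne
  have hsub : {ω | (inner ℝ a (X ω) : ℝ) = 0 ∧ (inner ℝ b (X ω) : ℝ) ≠ 0}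
      ⊆ {ω | (inner ℝ w1 (X ω) : ℝ) * (inner ℝ w2 (X ω) : ℝ) < 0} := by
    rintro ω ⟨h0, hne⟩
    simp only [Set.mem_setOf_eq]
    have e1 : (inner ℝ w1 (X ω) : ℝ) = ‖p‖⁻¹ * (ε * inner ℝ b (X ω)) := by
      rw [hw1, real_inner_smul_left, hp, inner_add_left, h0, real_inner_smul_left]
      ring
    have e2 : (inner ℝ w2 (X ω) : ℝ) = ‖q‖⁻¹ * (-(ε * inner ℝ b (X ω))) := by
      rw [hw2, real_inner_smul_left, hq, inner_sub_left, h0, real_inner_smul_left]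
      ring
    rw [e1, e2]
    have h1 : (0:ℝ) < ‖p‖⁻¹ := by positivity
    have h2 : (0:ℝ) < ‖q‖⁻¹ := by positivity
    have ht : ε * (inner ℝ b (X ω) : ℝ) ≠ 0 := mul_ne_zero hε0.ne' hne
    have key : ‖p‖⁻¹ * (ε * (inner ℝ b (X ω) : ℝ)) * (‖q‖⁻¹ * -(ε * (inner ℝ b (X ω) : ℝ)))
        = -(‖p‖⁻¹ * ‖q‖⁻¹ * (ε * (inner ℝ b (X ω) : ℝ))^2) := by ring
    rw [key, neg_lt_zero]
    positivity
  -- norm bound helpers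
  have hbound : ∀ (v : EuclideanSpace ℝ (Fin d)), v ≠ 0 → 1 - ε ≤ ‖v‖ → ‖v‖ ≤ 1 + ε →
      ‖(‖v‖⁻¹ • v) - v‖ ≤ 2 * ε := by
    intro v hv hl hu
    have hvp : (0:ℝ) < ‖v‖ := norm_pos_iff.2 hv
    have heq : (‖v‖⁻¹ • v) - v = (‖v‖⁻¹ - 1) • v := by module
    rw [heq, norm_smul, Real.norm_eq_abs]
    have habs : |‖v‖⁻¹ - 1| * ‖v‖ = |1 - ‖v‖| := by
      rw [← abs_of_pos hvp, ← abs_mul]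
      congr 1
      rw [abs_of_pos hvp, sub_mul, inv_mul_cancel₀ hvp.ne', one_mul]
    rw [habs]
    rw [abs_le]
    constructor <;> linarith
  have hw1a : ‖w1 - a‖ ≤ 3 * ε := by
    have h1 : ‖w1 - p‖ ≤ 2 * ε := hbound p hpne hpl hpu
    have h2 : ‖p - a‖ = ε := by rw [hp]; simpa using hεb
    calc ‖w1 - a‖ ≤ ‖w1 - p‖ + ‖p - a‖ := norm_sub_le_norm_sub_add_norm_sub _ _ _
    _ ≤ 2 * ε + ε := by rw [h2]; linarith
    _ = 3 * ε := by ring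
  have hw2a : ‖w2 - a‖ ≤ 3 * ε := by
    have h1 : ‖w2 - q‖ ≤ 2 * ε := hbound q hqne hql hqu
    have h2 : ‖q - a‖ = ε := by
      rw [hq]
      have : a - ε • b - a = -(ε • b) := by abel
      rw [this, norm_neg, hεb]
    calc ‖w2 - a‖ ≤ ‖w2 - q‖ + ‖q - a‖ := norm_sub_le_norm_sub_add_norm_sub _ _ _
    _ ≤ 2 * ε + ε := by rw [h2]; linarith
    _ = 3 * ε := by ring
  have hdist : ‖w1 - w2‖ ≤ 8 * ε := by
    calc ‖w1 - w2‖ ≤ ‖w1 - a‖ + ‖a - w2‖ := norm_sub_le_norm_sub_add_norm_sub _ _ _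
    _ = ‖w1 - a‖ + ‖w2 - a‖ := by rw [norm_sub_rev a w2]
    _ ≤ 3 * ε + 3 * ε := add_le_add hw1a hw2a
    _ ≤ 8 * ε := by linarith
  calc (P {ω | (inner ℝ a (X ω) : ℝ) = 0 ∧ (inner ℝ b (X ω) : ℝ) ≠ 0}).toReal
      ≤ (P {ω | (inner ℝ w1 (X ω) : ℝ) * (inner ℝ w2 (X ω) : ℝ) < 0}).toReal :=
        ENNReal.toReal_mono (measure_ne_top P _) (measure_mono hsub)
    _ ≤ c * ‖w1 - w2‖ := hA1 w1 w2 hw1n hw2n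
    _ ≤ c * (8 * ε) := by nlinarith

/-- Under Assumption A1, the 0-1 classification risk of linear classifiers is
locally Lipschitz at the (unit norm) minimizer: `R(θ) - R(θ̄) ≤ 2c‖θ - θ̄‖`. -/
theorem risk_lipschitz_at_minimizer {Ω : Type*} [MeasurableSpace Ω]
    (P : Measure Ω) [IsProbabilityMeasure P]
    (d : ℕ) (X : Ω → EuclideanSpace ℝ (Fin d)) (Y : Ω → Bool)
    (c : ℝ) (hc : 0 < c)
    (hA1 : ∀ θ θ' : EuclideanSpace ℝ (Fin d), ‖θ‖ = 1 → ‖θ'‖ = 1 →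
      (P {ω | (inner ℝ θ (X ω) : ℝ) * (inner ℝ θ' (X ω) : ℝ) < 0}).toReal
        ≤ c * ‖θ - θ'‖)
    (θbar : EuclideanSpace ℝ (Fin d)) (hθbar : ‖θbar‖ = 1)
    (hmin : ∀ θ : EuclideanSpace ℝ (Fin d),
      (P {ω | (if (0:ℝ) ≤ (inner ℝ θbar (X ω) : ℝ) then true else false) ≠ Y ω}).toReal
        ≤ (P {ω | (if (0:ℝ) ≤ (inner ℝ θ (X ω) : ℝ) then true else false) ≠ Y ω}).toReal)
    (θ : EuclideanSpace ℝ (Fin d)) (hθ : θ ≠ 0) :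
    (P {ω | (if (0:ℝ) ≤ (inner ℝ θ (X ω) : ℝ) then true else false) ≠ Y ω}).toReal
      - (P {ω | (if (0:ℝ) ≤ (inner ℝ θbar (X ω) : ℝ) then true else false) ≠ Y ω}).toReal
      ≤ 2 * c * ‖θ - θbar‖ := by
  have hθn : (0:ℝ) < ‖θ‖ := norm_pos_iff.2 hθ
  set u : EuclideanSpace ℝ (Fin d) := ‖θ‖⁻¹ • θ with hu
  have hun : ‖u‖ = 1 := norm_smul_inv_norm hθ
  -- the error set of θ equals that of u
  have hsame : {ω | (if (0:ℝ) ≤ (inner ℝ θ (X ω) : ℝ) then true else false) ≠ Y ω}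
      = {ω | (if (0:ℝ) ≤ (inner ℝ u (X ω) : ℝ) then true else false) ≠ Y ω} := by
    ext ω
    simp only [Set.mem_setOf_eq]
    have : (inner ℝ u (X ω) : ℝ) = ‖θ‖⁻¹ * inner ℝ θ (X ω) := real_inner_smul_left _ _ _
    rw [this]
    have hiff : ((0:ℝ) ≤ inner ℝ θ (X ω)) ↔ ((0:ℝ) ≤ ‖θ‖⁻¹ * inner ℝ θ (X ω)) := by
      constructor
      · intro h; positivity
      · intro h
        by_contra hneg
        push_neg at hneg
        nlinarith [inv_pos.2 hθn]
    by_cases h : (0:ℝ) ≤ (inner ℝ θ (X ω) : ℝ)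
    · rw [if_pos h, if_pos (hiff.1 h)]
    · rw [if_neg h, if_neg (fun h' => h (hiff.2 h'))]
  rw [hsame]
  -- disagreement decomposition
  set E : EuclideanSpace ℝ (Fin d) → Set Ω :=
    fun v => {ω | (if (0:ℝ) ≤ (inner ℝ v (X ω) : ℝ) then true else false) ≠ Y ω} with hE
  set D : Set Ω := {ω | (inner ℝ u (X ω) : ℝ) * (inner ℝ θbar (X ω) : ℝ) < 0} with hD
  set A1 : Set Ω := {ω | (inner ℝ u (X ω) : ℝ) = 0 ∧ (inner ℝ θbar (X ω) : ℝ) ≠ 0} with hA1s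
  set A2 : Set Ω := {ω | (inner ℝ θbar (X ω) : ℝ) = 0 ∧ (inner ℝ u (X ω) : ℝ) ≠ 0} with hA2s
  have hsubset : E u ⊆ E θbar ∪ (D ∪ (A1 ∪ A2)) := by
    intro ω hω
    by_cases hb : ω ∈ E θbar
    · exact Set.mem_union_left _ hb
    right
    simp only [hE, Set.mem_setOf_eq, not_not] at hω hb
    have hne : (if (0:ℝ) ≤ (inner ℝ u (X ω) : ℝ) then true else false)
        ≠ (if (0:ℝ) ≤ (inner ℝ θbar (X ω) : ℝ) then true else false) := by
      rw [hb]; exact hω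
    rcases le_or_gt 0 (inner ℝ u (X ω) : ℝ) with h1 | h1 <;>
      rcases le_or_gt 0 (inner ℝ θbar (X ω) : ℝ) with h2 | h2
    · exact absurd (by rw [if_pos h1, if_pos h2]) hne
    · -- u ≥ 0, θbar < 0
      rcases h1.lt_or_eq with h1' | h1'
      · exact Or.inl (mul_neg_of_pos_of_neg h1' h2)
      · exact Or.inr (Or.inl ⟨h1'.symm, ne_of_lt h2⟩)
    · -- u < 0, θbar ≥ 0
      rcases h2.lt_or_eq with h2' | h2'
      · exact Or.inl (mul_neg_of_neg_of_pos h1 h2')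
      · exact Or.inr (Or.inr ⟨h2'.symm, ne_of_lt h1⟩)
    · exact absurd (by rw [if_neg (not_le.2 h1), if_neg (not_le.2 h2)]) hne
  have hmeas : (P (E u)).toReal ≤ (P (E θbar)).toReal + ((P D).toReal
      + ((P A1).toReal + (P A2).toReal)) := by
    calc (P (E u)).toReal ≤ (P (E θbar ∪ (D ∪ (A1 ∪ A2)))).toReal :=
          ENNReal.toReal_mono (measure_ne_top P _) (measure_mono hsubset)
    _ ≤ (P (E θbar)).toReal + (P (D ∪ (A1 ∪ A2))).toReal := by
        rw [← ENNReal.toReal_add (measure_ne_top P _) (measure_ne_top P _)]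
        exact ENNReal.toReal_mono (by finiteness) (measure_union_le _ _)
    _ ≤ (P (E θbar)).toReal + ((P D).toReal + (P (A1 ∪ A2)).toReal) := by
        gcongr
        rw [← ENNReal.toReal_add (measure_ne_top P _) (measure_ne_top P _)]
        exact ENNReal.toReal_mono (by finiteness) (measure_union_le _ _)
    _ ≤ (P (E θbar)).toReal + ((P D).toReal + ((P A1).toReal + (P A2).toReal)) := by
        gcongr
        rw [← ENNReal.toReal_add (measure_ne_top P _) (measure_ne_top P _)]
        exact ENNReal.toReal_mono (by finiteness) (measure_union_le _ _)
  have hA1z : (P A1).toReal = 0 := aux_boundary_null P X c hc hA1 u θbar hun hθbar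
  have hA2z : (P A2).toReal = 0 := aux_boundary_null P X c hc hA1 θbar u hθbar hun
  have hDb : (P D).toReal ≤ c * ‖u - θbar‖ := hA1 u θbar hun hθbar
  -- norm comparison
  have hnorm : ‖u - θbar‖ ≤ 2 * ‖θ - θbar‖ := by
    have h1 : ‖u - θ‖ = |1 - ‖θ‖| := by
      have heq : u - θ = (‖θ‖⁻¹ - 1) • θ := by rw [hu]; module
      rw [heq, norm_smul, Real.norm_eq_abs, ← abs_of_pos hθn, ← abs_mul]
      congr 1
      rw [abs_of_pos hθn, sub_mul, inv_mul_cancel₀ hθn.ne', one_mul]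
    have h2 : |1 - ‖θ‖| ≤ ‖θ - θbar‖ := by
      have := abs_norm_sub_norm_le θbar θ
      rw [hθbar, norm_sub_rev] at this
      linarith [this]
    calc ‖u - θbar‖ ≤ ‖u - θ‖ + ‖θ - θbar‖ := norm_sub_le_norm_sub_add_norm_sub _ _ _
    _ ≤ ‖θ - θbar‖ + ‖θ - θbar‖ := by rw [h1]; linarith
    _ = 2 * ‖θ - θbar‖ := by ring
  have := hmeas
  rw [hA1z, hA2z] at this
  have hfinal : (P (E u)).toReal - (P (E θbar)).toReal ≤ c * ‖u - θbar‖ := by linarith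
  calc (P (E u)).toReal - (P (E θbar)).toReal ≤ c * ‖u - θbar‖ := hfinal
  _ ≤ c * (2 * ‖θ - θbar‖) := by nlinarith
  _ = 2 * c * ‖θ - θbar‖ := by ring
end
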